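/- Bathtub principle for Landau levels: for every b > 0 and every g ≥ 0, the infimum of ∑_{n=0}^∞ b(2n+1) m(n), taken over all functions m : ℕ → ℝ with 0 ≤ m(n) ≤ 1 for all n and ∑_{n=0}^∞ m(n) = 2πg/b, equals (4π/b) F(b,g). -/
import Mathlib


open Real

/-- The magnetic penalization function
`F(b,g) = πg² + (b²/(4π))·{2πg/b}·(1 − {2πg/b})`. -/
noncomputable def Fpen (b g : ℝ) : ℝ :=
  π * g ^ 2 + b ^ 2 / (4 * π) * Int.fract (2 * π * g / b) * (1 - Int.fract (2 * π * g / b))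

private lemma sum_odd_sq (N : ℕ) : ∑ n ∈ Finset.range N, (2 * (n : ℝ) + 1) = (N : ℝ) ^ 2 := by
  induction N with
  | zero => simp
  | succ k ih => rw [Finset.sum_range_succ, ih]; push_cast; ring

/-- Bathtub principle for Landau levels: the infimum of `∑ₙ b(2n+1) m(n)` over all
`m : ℕ → ℝ` with `0 ≤ m(n) ≤ 1` and `∑ₙ m(n) = 2πg/b` equals `(4π/b) F(b,g)`.
(The possibly infinite objective value is computed in `ℝ≥0∞`.) -/
theorem bathtub_landau (b g : ℝ) (hb : 0 < b) (hg : 0 ≤ g) :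
    sInf {S : ENNReal | ∃ m : ℕ → ℝ,
        (∀ n, 0 ≤ m n ∧ m n ≤ 1) ∧ Summable m ∧ (∑' n, m n) = 2 * π * g / b ∧
        S = ∑' n, ENNReal.ofReal (b * (2 * n + 1) * m n)} =
      ENNReal.ofReal ((4 * π / b) * Fpen b g) := by
  have hπ := Real.pi_pos
  set t : ℝ := 2 * π * g / b with htdef
  have ht : 0 ≤ t := by positivity
  set N : ℕ := ⌊t⌋.toNat with hNdef
  set θ : ℝ := Int.fract t with hθdef
  have hθ0 : 0 ≤ θ := Int.fract_nonneg t
  have hθ1 : θ < 1 := Int.fract_lt_one t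
  have hNfloor : ((N : ℕ) : ℝ) = ((⌊t⌋ : ℤ) : ℝ) := by
    rw [hNdef]
    exact_mod_cast congrArg (fun z : ℤ => (z : ℝ))
      (Int.toNat_of_nonneg (Int.floor_nonneg.mpr ht))
  have htN : t = (N : ℝ) + θ := by
    have h := Int.floor_add_fract t
    rw [hNfloor]; linarith
  -- the target value as a real number
  set V : ℝ := b * ((N : ℝ) ^ 2 + (2 * N + 1) * θ) with hVdef
  have hVtarget : (4 * π / b) * Fpen b g = V := by
    have hg' : g = b * t / (2 * π) := by
      rw [htdef]; field_simp
    rw [Fpen, hVdef]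
    have hfr : Int.fract (2 * π * g / b) = θ := rfl
    rw [hfr, hg', htN]
    field_simp
    ring
  -- the optimal occupation numbers
  set ms : ℕ → ℝ := fun n => if n < N then 1 else if n = N then θ else 0 with hms
  have hms_nonneg : ∀ n, 0 ≤ ms n := by
    intro n; rw [hms]; dsimp only
    split_ifs with h1 h2
    exacts [zero_le_one, hθ0, le_refl 0]
  have hms_le : ∀ n, ms n ≤ 1 := by
    intro n; rw [hms]; dsimp only
    split_ifs with h1 h2
    exacts [le_refl 1, hθ1.le, zero_le_one]
  have hms_zero : ∀ n ∉ Finset.range (N + 1), ms n = 0 := by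
    intro n hn
    rw [Finset.mem_range, not_lt] at hn
    rw [hms]; dsimp only
    rw [if_neg (by omega), if_neg (by omega)]
  have hms_eq_one : ∀ n < N, ms n = 1 := by
    intro n hn; rw [hms]; dsimp only; rw [if_pos hn]
  have hms_at_N : ms N = θ := by
    rw [hms]; dsimp only; rw [if_neg (lt_irrefl N), if_pos rfl]
  have hms_summable : Summable ms := summable_of_ne_finset_zero hms_zero
  have hms_sum : ∑' n, ms n = t := by
    rw [tsum_eq_sum hms_zero, Finset.sum_range_succ]
    have h1 : ∑ n ∈ Finset.range N, ms n = ∑ n ∈ Finset.range N, (1 : ℝ) :=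
      Finset.sum_congr rfl fun n hn => hms_eq_one n (Finset.mem_range.mp hn)
    rw [h1, hms_at_N, Finset.sum_const, Finset.card_range, htN]
    simp
  -- value of the objective at ms
  have hms_val : (∑' n, ENNReal.ofReal (b * (2 * n + 1) * ms n)) = ENNReal.ofReal V := by
    rw [tsum_eq_sum (s := Finset.range (N + 1))
      (fun n hn => by rw [hms_zero n hn, mul_zero, ENNReal.ofReal_zero]),
      ← ENNReal.ofReal_sum_of_nonneg
        (fun n _ => mul_nonneg (by positivity) (hms_nonneg n))]
    congr 1
    rw [Finset.sum_range_succ]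
    have h1 : ∑ n ∈ Finset.range N, b * (2 * (n : ℝ) + 1) * ms n
        = ∑ n ∈ Finset.range N, b * (2 * (n : ℝ) + 1) := by
      refine Finset.sum_congr rfl fun n hn => ?_
      rw [hms_eq_one n (Finset.mem_range.mp hn), mul_one]
    rw [h1, ← Finset.mul_sum, sum_odd_sq, hms_at_N, hVdef]; ring
  -- lower bound for any admissible m
  have hlow : ∀ m : ℕ → ℝ, (∀ n, 0 ≤ m n ∧ m n ≤ 1) → Summable m → (∑' n, m n) = t →
      ENNReal.ofReal V ≤ ∑' n, ENNReal.ofReal (b * (2 * n + 1) * m n) := by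
    intro m hm hsm hsum
    have hmn : ∀ n, 0 ≤ m n := fun n => (hm n).1
    -- pointwise rearrangement inequality
    have key : ∀ n : ℕ, b * (2 * n + 1) * ms n + b * (2 * N + 1) * m n
        ≤ b * (2 * n + 1) * m n + b * (2 * N + 1) * ms n := by
      intro n
      rcases lt_trichotomy n N with h | h | h
      · rw [hms_eq_one n h]
        have h2 : (n : ℝ) < N := by exact_mod_cast h
        nlinarith [mul_nonneg (mul_nonneg hb.le (by linarith : (0:ℝ) ≤ (N:ℝ) - n))
          (by linarith [(hm n).2] : (0:ℝ) ≤ 1 - m n)]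
      · subst h; exact le_of_eq (by ring)
      · have h1 : ms n = 0 := hms_zero n (by rw [Finset.mem_range]; omega)
        rw [h1]
        have h2 : (N : ℝ) < n := by exact_mod_cast h
        nlinarith [mul_nonneg (mul_nonneg hb.le (by linarith : (0:ℝ) ≤ (n:ℝ) - N)) (hmn n)]
    -- sum of m in ℝ≥0∞
    have hmsum' : (∑' n, ENNReal.ofReal (m n)) = ENNReal.ofReal t := by
      rw [← ENNReal.ofReal_tsum_of_nonneg hmn hsm, hsum]
    have hmssum' : (∑' n, ENNReal.ofReal (ms n)) = ENNReal.ofReal t := by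
      rw [← ENNReal.ofReal_tsum_of_nonneg hms_nonneg hms_summable, hms_sum]
    have hc : 0 ≤ b * (2 * (N : ℝ) + 1) := by positivity
    have hfactor : ∀ f : ℕ → ℝ, (∀ n, 0 ≤ f n) →
        (∑' n, ENNReal.ofReal (b * (2 * N + 1) * f n))
          = ENNReal.ofReal (b * (2 * N + 1)) * ∑' n, ENNReal.ofReal (f n) := by
      intro f hf
      rw [← ENNReal.tsum_mul_left]
      exact tsum_congr fun n => ENNReal.ofReal_mul hc
    have hK : ENNReal.ofReal (b * (2 * N + 1)) * ENNReal.ofReal t ≠ ⊤ :=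
      ENNReal.mul_ne_top ENNReal.ofReal_ne_top ENNReal.ofReal_ne_top
    rw [← ENNReal.add_le_add_iff_right hK, ← hms_val]
    calc (∑' n, ENNReal.ofReal (b * (2 * n + 1) * ms n))
          + ENNReal.ofReal (b * (2 * N + 1)) * ENNReal.ofReal t
        = (∑' n, ENNReal.ofReal (b * (2 * n + 1) * ms n))
          + ∑' n, ENNReal.ofReal (b * (2 * N + 1) * m n) := by
          rw [hfactor m hmn, hmsum']
      _ = ∑' n, (ENNReal.ofReal (b * (2 * n + 1) * ms n)
            + ENNReal.ofReal (b * (2 * N + 1) * m n)) := (ENNReal.tsum_add).symm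
      _ = ∑' n, ENNReal.ofReal (b * (2 * n + 1) * ms n + b * (2 * N + 1) * m n) := by
          refine tsum_congr fun n => ?_
          rw [ENNReal.ofReal_add (mul_nonneg (by positivity) (hms_nonneg n))
            (mul_nonneg (by positivity) (hmn n))]
      _ ≤ ∑' n, ENNReal.ofReal (b * (2 * n + 1) * m n + b * (2 * N + 1) * ms n) :=
          ENNReal.tsum_le_tsum fun n => ENNReal.ofReal_le_ofReal (key n)
      _ = ∑' n, (ENNReal.ofReal (b * (2 * n + 1) * m n)
            + ENNReal.ofReal (b * (2 * N + 1) * ms n)) := by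
          refine tsum_congr fun n => ?_
          rw [ENNReal.ofReal_add (mul_nonneg (by positivity) (hmn n))
            (mul_nonneg (by positivity) (hms_nonneg n))]
      _ = (∑' n, ENNReal.ofReal (b * (2 * n + 1) * m n))
          + ENNReal.ofReal (b * (2 * N + 1)) * ENNReal.ofReal t := by
          rw [ENNReal.tsum_add, hfactor ms hms_nonneg, hmssum']
  -- conclude
  rw [hVtarget]
  apply le_antisymm
  · exact sInf_le ⟨ms, fun n => ⟨hms_nonneg n, hms_le n⟩, hms_summable, hms_sum, hms_val.symm⟩
  · refine le_sInf ?_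
    rintro S ⟨m, hm, hsm, hsum, rfl⟩
    exact hlow m hm hsm hsum
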